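/- Let δ = (δ1,δ2,δ3) ∈ {0,1}³, let ℓ ≥ 0 and m1, m2 be integers with |m1|,|m2| ≤ ℓ and m1 ≡ δ1+δ2 (mod 2), and define v(α,β,γ) := D^ℓ_{m1,m2}(α,β,γ) + (−1)^{δ1+δ3+ℓ} · D^ℓ_{−m1,m2}(α,β,γ). Then v satisfies both parity conditions: v(α,β,γ) = (−1)^{δ1+δ2} v(α+π,β,γ) and v(α,β,γ) = (−1)^{δ2+δ3} v(π−α,π−β,π+γ) for all α, γ ∈ ℝ and 0 < β < π. (Consequently v is the restriction to Euler angles of an element v_{ℓ,m1,m2} of the principal series V_{λ,δ} of SL(3,ℝ), for every admissible λ.) -/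

import Mathlib

open Real Complex

/-- factorial of an integer (junk value for negative inputs), as a real number -/
noncomputable def zfact (n : ℤ) : ℝ := (Nat.factorial n.toNat : ℝ)

/-- The Wigner little-d function `d^ℓ_{m1,m2}(x)`. -/
noncomputable def wd (ℓ m1 m2 : ℤ) (x : ℝ) : ℝ :=
  (-1 : ℝ) ^ (ℓ - m1) * (2 : ℝ) ^ (-ℓ) *
    Real.sqrt ((zfact (ℓ + m2) * (1 - x) ^ (m1 - m2)) /
      (zfact (ℓ - m2) * zfact (ℓ + m1) * zfact (ℓ - m1) * (1 + x) ^ (m1 + m2))) *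
    iteratedDeriv (ℓ - m2).toNat (fun y : ℝ => (1 - y) ^ (ℓ - m1) * (1 + y) ^ (ℓ + m1)) x

/-- The Wigner function of Euler angles `D^ℓ_{m1,m2}(α,β,γ)`, with the convention that it
vanishes for inadmissible indices. -/
noncomputable def wD (ℓ m1 m2 : ℤ) (α β γ : ℝ) : ℂ :=
  if 0 ≤ ℓ ∧ |m1| ≤ ℓ ∧ |m2| ≤ ℓ then
    Complex.exp (Complex.I * m1 * α) * (wd ℓ m1 m2 (Real.cos β) : ℂ) *
      Complex.exp (Complex.I * m2 * γ)
  else 0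

/-!
Shifting `α` by `π` multiplies `D^ℓ_{m1,m2}` by `(-1)^m1`, while
`(α, β, γ) ↦ (π - α, π - β, π + γ)` sends `D^ℓ_{m1,m2}` to `(-1)^(ℓ+m1) D^ℓ_{-m1,m2}`: the latter
comes from `d^ℓ_{m1,m2}(-x) = (-1)^(ℓ-m2) d^ℓ_{-m1,m2}(x)`, since `x ↦ -x` swaps the factors
`1 - x` and `1 + x` of the Rodrigues-type formula. Hence `v` is an eigenvector of both
transformations, with eigenvalues `(-1)^m1` and `(-1)^(δ1+δ3+m1)`, and the congruence on `m1`
turns these into `(-1)^(δ1+δ2)` and `(-1)^(δ2+δ3)`.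
-/

lemma neg_one_zpow_eq_of_even_sub {K : Type*} [DivisionRing K] {a b : ℤ} (h : Even (a - b)) :
    (-1 : K) ^ a = (-1 : K) ^ b := by
  rw [← sub_add_cancel a b, zpow_add₀ (neg_ne_zero.mpr one_ne_zero), h.neg_one_zpow, one_mul]

lemma iteratedDeriv_apply_neg {𝕜 F : Type*} [NontriviallyNormedField 𝕜] [NormedAddCommGroup F]
    [NormedSpace 𝕜 F] (n : ℕ) (f : 𝕜 → F) (a : 𝕜) :
    iteratedDeriv n f (-a) = (-1 : 𝕜) ^ n • iteratedDeriv n (fun x => f (-x)) a := by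
  rw [iteratedDeriv_comp_neg, smul_smul, ← mul_pow, neg_one_mul, neg_neg, one_pow, one_smul]

lemma wd_neg (ℓ m1 m2 : ℤ) {x : ℝ} (hx : |x| < 1) :
    wd ℓ m1 m2 (-x) = (-1 : ℝ) ^ (ℓ - m2).toNat * wd ℓ (-m1) m2 x := by
  obtain ⟨hx₁, hx₂⟩ := abs_lt.mp hx
  have hsign : (-1 : ℝ) ^ (ℓ - m1) = (-1 : ℝ) ^ (ℓ - -m1) :=
    neg_one_zpow_eq_of_even_sub ⟨-m1, by ring⟩
  have hsqrt_arg : zfact (ℓ + m2) * (1 - -x) ^ (m1 - m2) /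
        (zfact (ℓ - m2) * zfact (ℓ + m1) * zfact (ℓ - m1) * (1 + -x) ^ (m1 + m2)) =
      zfact (ℓ + m2) * (1 - x) ^ (-m1 - m2) /
        (zfact (ℓ - m2) * zfact (ℓ + -m1) * zfact (ℓ - -m1) * (1 + x) ^ (-m1 + m2)) := by
    have h₁ : 1 - x ≠ 0 := by linarith
    have h₂ : 1 + x ≠ 0 := by linarith
    rw [sub_neg_eq_add, ← sub_eq_add_neg, sub_neg_eq_add, ← sub_eq_add_neg,
      show -m1 - m2 = -(m1 + m2) by ring, show -m1 + m2 = -(m1 - m2) by ring, zpow_neg, zpow_neg]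
    field_simp
  have hpoly : (fun y : ℝ => (1 - -y) ^ (ℓ - m1) * (1 + -y) ^ (ℓ + m1)) =
      fun y : ℝ => (1 - y) ^ (ℓ - -m1) * (1 + y) ^ (ℓ + -m1) := by
    funext y
    rw [sub_neg_eq_add, ← sub_eq_add_neg, sub_neg_eq_add, ← sub_eq_add_neg, mul_comm]
  unfold wd
  rw [hsign, hsqrt_arg, iteratedDeriv_apply_neg, hpoly, smul_eq_mul]
  ring

lemma exp_I_mul_intCast_mul_pi (m : ℤ) : cexp (I * m * π) = (-1 : ℂ) ^ m := by
  rw [show I * m * π = m * (π * I) by ring, exp_int_mul, exp_pi_mul_I]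

lemma wD_add_pi (ℓ m1 m2 : ℤ) (α β γ : ℝ) :
    wD ℓ m1 m2 (α + π) β γ = (-1 : ℂ) ^ m1 * wD ℓ m1 m2 α β γ := by
  unfold wD
  split_ifs
  · rw [ofReal_add, mul_add, Complex.exp_add, exp_I_mul_intCast_mul_pi]
    ring
  · rw [mul_zero]

lemma wD_pi_sub (ℓ m1 m2 : ℤ) (α γ : ℝ) {β : ℝ} (hβ : β ∈ Set.Ioo 0 π) :
    wD ℓ m1 m2 (π - α) (π - β) (π + γ) = (-1 : ℂ) ^ (ℓ + m1) * wD ℓ (-m1) m2 α β γ := by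
  have hcos : |Real.cos β| < 1 := by
    have hsin := sin_pos_of_pos_of_lt_pi hβ.1 hβ.2
    have hpyth := Real.sin_sq_add_cos_sq β
    exact abs_lt.mpr ⟨by nlinarith, by nlinarith⟩
  unfold wD
  rw [abs_neg]
  split_ifs with h
  · have hn : (((ℓ - m2).toNat : ℕ) : ℤ) = ℓ - m2 :=
      Int.toNat_of_nonneg (by linarith [le_abs_self m2, h.2.2])
    have hsign : cexp (I * m1 * π) * (-1 : ℂ) ^ (ℓ - m2).toNat * cexp (I * m2 * π) =
        (-1 : ℂ) ^ (ℓ + m1) := by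
      rw [exp_I_mul_intCast_mul_pi, exp_I_mul_intCast_mul_pi, ← zpow_natCast, hn,
        ← zpow_add₀ (neg_ne_zero.mpr one_ne_zero), ← zpow_add₀ (neg_ne_zero.mpr one_ne_zero)]
      ring_nf
    rw [Real.cos_pi_sub, wd_neg ℓ m1 m2 hcos, ← hsign]
    push_cast
    simp only [mul_sub, mul_add, mul_neg, neg_mul, Complex.exp_sub, Complex.exp_add,
      Complex.exp_neg]
    ring
  · rw [mul_zero]

lemma wD_add_mul_wD_neg_add_pi (ℓ m1 m2 : ℤ) (c : ℂ) (α β γ : ℝ) :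
    wD ℓ m1 m2 (α + π) β γ + c * wD ℓ (-m1) m2 (α + π) β γ =
      (-1 : ℂ) ^ m1 * (wD ℓ m1 m2 α β γ + c * wD ℓ (-m1) m2 α β γ) := by
  rw [wD_add_pi, wD_add_pi, neg_one_zpow_eq_of_even_sub (a := -m1) (b := m1) ⟨-m1, by ring⟩]
  ring

lemma wD_add_mul_wD_neg_pi_sub (ℓ m1 m2 : ℤ) {c : ℂ} (hc : c ^ 2 = 1) (α γ : ℝ) {β : ℝ}
    (hβ : β ∈ Set.Ioo 0 π) :
    wD ℓ m1 m2 (π - α) (π - β) (π + γ) + c * wD ℓ (-m1) m2 (π - α) (π - β) (π + γ) =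
      (-1 : ℂ) ^ (ℓ + m1) * c * (wD ℓ m1 m2 α β γ + c * wD ℓ (-m1) m2 α β γ) := by
  rw [wD_pi_sub ℓ m1 m2 α γ hβ, wD_pi_sub ℓ (-m1) m2 α γ hβ, neg_neg,
    neg_one_zpow_eq_of_even_sub (a := ℓ + -m1) (b := ℓ + m1) ⟨-m1, by ring⟩]
  linear_combination (-(-1 : ℂ) ^ (ℓ + m1) * wD ℓ (-m1) m2 α β γ) * hc

theorem basis_vector_parity_general (δ1 δ2 δ3 : ℕ) (ℓ m1 m2 : ℤ)
    (hcong : m1 % 2 = ((δ1 : ℤ) + (δ2 : ℤ)) % 2) :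
    ∀ α γ : ℝ, ∀ β ∈ Set.Ioo (0 : ℝ) π,
      (fun a b c : ℝ => wD ℓ m1 m2 a b c + (-1 : ℂ) ^ ((δ1 : ℤ) + (δ3 : ℤ) + ℓ) *
          wD ℓ (-m1) m2 a b c) α β γ =
        (-1 : ℂ) ^ (δ1 + δ2) *
          (fun a b c : ℝ => wD ℓ m1 m2 a b c + (-1 : ℂ) ^ ((δ1 : ℤ) + (δ3 : ℤ) + ℓ) *
            wD ℓ (-m1) m2 a b c) (α + π) β γ ∧
      (fun a b c : ℝ => wD ℓ m1 m2 a b c + (-1 : ℂ) ^ ((δ1 : ℤ) + (δ3 : ℤ) + ℓ) *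
          wD ℓ (-m1) m2 a b c) α β γ =
        (-1 : ℂ) ^ (δ2 + δ3) *
          (fun a b c : ℝ => wD ℓ m1 m2 a b c + (-1 : ℂ) ^ ((δ1 : ℤ) + (δ3 : ℤ) + ℓ) *
            wD ℓ (-m1) m2 a b c) (π - α) (π - β) (π + γ) := by
  intro α γ β hβ
  have hc : ((-1 : ℂ) ^ ((δ1 : ℤ) + δ3 + ℓ)) ^ 2 = 1 := by
    rw [← zpow_natCast, ← zpow_mul]
    exact Even.neg_one_zpow ⟨(δ1 : ℤ) + δ3 + ℓ, by push_cast; ring⟩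
  have hsign_add_pi : (-1 : ℂ) ^ m1 = (-1) ^ (δ1 + δ2) := by
    rw [← zpow_natCast]
    exact neg_one_zpow_eq_of_even_sub (Int.even_iff.mpr (by push_cast; omega))
  have hsign_pi_sub : (-1 : ℂ) ^ (ℓ + m1) * (-1) ^ ((δ1 : ℤ) + δ3 + ℓ) = (-1) ^ (δ2 + δ3) := by
    rw [← zpow_add₀ (neg_ne_zero.mpr one_ne_zero), ← zpow_natCast]
    exact neg_one_zpow_eq_of_even_sub (Int.even_iff.mpr (by push_cast; omega))
  have sign_cancel (n : ℕ) (z : ℂ) : z = (-1) ^ n * ((-1) ^ n * z) := by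
    rw [← mul_assoc, ← mul_pow, neg_one_mul, neg_neg, one_pow, one_mul]
  dsimp only
  refine ⟨?_, ?_⟩
  · rw [wD_add_mul_wD_neg_add_pi, hsign_add_pi]
    exact sign_cancel _ _
  · rw [wD_add_mul_wD_neg_pi_sub ℓ m1 m2 hc α γ hβ, hsign_pi_sub]
    exact sign_cancel _ _

/-- The basis vectors `v_{ℓ,m1,m2} = D^ℓ_{m1,m2} + (−1)^{δ1+δ3+ℓ} D^ℓ_{−m1,m2}` satisfy
both parity conditions of Lemma 4.1, hence lie in the principal series `V_{λ,δ}`. -/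
theorem basis_vector_parity (δ1 δ2 δ3 : ℕ) (hδ1 : δ1 ≤ 1) (hδ2 : δ2 ≤ 1) (hδ3 : δ3 ≤ 1)
    (ℓ m1 m2 : ℤ) (hℓ : 0 ≤ ℓ) (hm1 : |m1| ≤ ℓ) (hm2 : |m2| ≤ ℓ)
    (hcong : m1 % 2 = ((δ1 : ℤ) + (δ2 : ℤ)) % 2) :
    ∀ α γ : ℝ, ∀ β ∈ Set.Ioo (0 : ℝ) π,
      (fun a b c : ℝ => wD ℓ m1 m2 a b c + (-1 : ℂ) ^ ((δ1 : ℤ) + (δ3 : ℤ) + ℓ) *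
          wD ℓ (-m1) m2 a b c) α β γ =
        (-1 : ℂ) ^ (δ1 + δ2) *
          (fun a b c : ℝ => wD ℓ m1 m2 a b c + (-1 : ℂ) ^ ((δ1 : ℤ) + (δ3 : ℤ) + ℓ) *
            wD ℓ (-m1) m2 a b c) (α + π) β γ ∧
      (fun a b c : ℝ => wD ℓ m1 m2 a b c + (-1 : ℂ) ^ ((δ1 : ℤ) + (δ3 : ℤ) + ℓ) *
          wD ℓ (-m1) m2 a b c) α β γ =
        (-1 : ℂ) ^ (δ2 + δ3) *
          (fun a b c : ℝ => wD ℓ m1 m2 a b c + (-1 : ℂ) ^ ((δ1 : ℤ) + (δ3 : ℤ) + ℓ) *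
            wD ℓ (-m1) m2 a b c) (π - α) (π - β) (π + γ) :=
  basis_vector_parity_general δ1 δ2 δ3 ℓ m1 m2 hcong
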